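/- arXiv:0807.4683 — 2 statements merged into one kernel-verified Lean document; each statement's English description precedes it below -/
import Mathlib

section
/- Let G be a locally compact Hausdorff groupoid. The set Σ⁰ of closed subgroups of isotropy groups of G, equipped with the Fell topology on closed subsets of G, is a locally compact Hausdorff space; moreover Σ⁰ ∪ {∅} is compact in the space of closed subsets of G. -/
open MeasureTheory
/-- A topological groupoid, modeled as its arrow space with units embedded. -/
structure TopGroupoid (G : Type*) [TopologicalSpace G] where
  src : G → G
  rng : G → G
  comp : G → G → G
  inv : G → G
  src_src : ∀ x, src (src x) = src x
  rng_src : ∀ x, rng (src x) = src x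
  src_rng : ∀ x, src (rng x) = rng x
  rng_rng : ∀ x, rng (rng x) = rng x
  src_comp : ∀ x y, src x = rng y → src (comp x y) = src y
  rng_comp : ∀ x y, src x = rng y → rng (comp x y) = rng x
  comp_assoc : ∀ x y z, src x = rng y → src y = rng z →
    comp (comp x y) z = comp x (comp y z)
  comp_rng : ∀ x, comp (rng x) x = x
  comp_src : ∀ x, comp x (src x) = x
  src_inv : ∀ x, src (inv x) = rng x
  rng_inv : ∀ x, rng (inv x) = src x
  comp_inv : ∀ x, comp x (inv x) = rng x
  inv_comp : ∀ x, comp (inv x) x = src x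
  continuous_src : Continuous src
  continuous_rng : Continuous rng
  continuous_inv : Continuous inv
  continuous_comp : Continuous fun p : {p : G × G // src p.1 = rng p.2} => comp p.1.1 p.1.2

variable {G : Type*} [TopologicalSpace G]

/-- `H` is a closed subgroup of the isotropy group of the groupoid at the unit `u`. -/
def TopGroupoid.IsIsotropySubgroup (gp : TopGroupoid G) (H : Set G) (u : G) : Prop :=
  IsClosed H ∧ gp.src u = u ∧ u ∈ H ∧ (∀ x ∈ H, gp.src x = u ∧ gp.rng x = u) ∧
    (∀ x ∈ H, gp.inv x ∈ H) ∧ ∀ x ∈ H, ∀ y ∈ H, gp.comp x y ∈ H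

/-- Conjugation `γ ↦ σγσ⁻¹` in a groupoid. -/
def TopGroupoid.conj (gp : TopGroupoid G) (σ γ : G) : G :=
  gp.comp (gp.comp σ γ) (gp.inv σ)

/-- The conjugate `σ·H = σHσ⁻¹` of a subgroup. -/
def TopGroupoid.conjSet (gp : TopGroupoid G) (σ : G) (H : Set G) : Set G :=
  gp.conj σ '' H

/-- The space of closed subsets of `G`, to be given the Fell topology. -/
def FellCloseds (G : Type*) [TopologicalSpace G] : Type _ := {F : Set G // IsClosed F}

/-- The Fell topology on the closed subsets of `G`: generated by the sets
`U(K; U₁,…,Uₙ) = {F : F ∩ K = ∅, F ∩ Uᵢ ≠ ∅}` with `K` compact and the `Uᵢ` open. -/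
instance (G : Type*) [TopologicalSpace G] : TopologicalSpace (FellCloseds G) :=
  TopologicalSpace.generateFrom
    ({S | ∃ K : Set G, IsCompact K ∧ S = {F : FellCloseds G | Disjoint F.1 K}} ∪
     {S | ∃ U : Set G, IsOpen U ∧ S = {F : FellCloseds G | (F.1 ∩ U).Nonempty}})

variable {G : Type*} [TopologicalSpace G]

/-- The space `Σ⁰` of closed subgroups of isotropy groups of the groupoid `gp`,
as a subset of the closed subsets of `G` with the Fell topology. -/
def sigmaZero (gp : TopGroupoid G) : Set (FellCloseds G) :=
  {H | ∃ u, gp.IsIsotropySubgroup H.1 u}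

open TopologicalSpace Set Filter Topology

lemma fell_open_miss {K : Set G} (hK : IsCompact K) :
    IsOpen {F : FellCloseds G | Disjoint F.1 K} :=
  TopologicalSpace.isOpen_generateFrom_of_mem (Or.inl ⟨K, hK, rfl⟩)

lemma fell_open_hit {U : Set G} (hU : IsOpen U) :
    IsOpen {F : FellCloseds G | (F.1 ∩ U).Nonempty} :=
  TopologicalSpace.isOpen_generateFrom_of_mem (Or.inr ⟨U, hU, rfl⟩)

lemma fell_compactSpace : CompactSpace (FellCloseds G) := by
  rw [← isCompact_univ_iff]
  refine isCompact_iff_ultrafilter_le_nhds.2 fun 𝒰 _ => ?_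
  set F0 : Set G :=
    {x | ∀ U : Set G, IsOpen U → x ∈ U → {F : FellCloseds G | (F.1 ∩ U).Nonempty} ∈ 𝒰} with hF0def
  have hF0 : IsClosed F0 := by
    rw [← isOpen_compl_iff]
    refine isOpen_iff_forall_mem_open.2 fun x hx => ?_
    simp only [hF0def, mem_compl_iff, mem_setOf_eq, not_forall] at hx
    obtain ⟨U, hU, hxU, hmem⟩ := hx
    exact ⟨U, fun y hy hyF => hmem (hyF U hU hy), hU, hxU⟩
  -- every generated open set containing F0 belongs to the ultrafilter
  have key : ∀ t : Set (FellCloseds G),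
      TopologicalSpace.GenerateOpen
        ({S | ∃ K : Set G, IsCompact K ∧ S = {F : FellCloseds G | Disjoint F.1 K}} ∪
         {S | ∃ U : Set G, IsOpen U ∧ S = {F : FellCloseds G | (F.1 ∩ U).Nonempty}}) t →
      (⟨F0, hF0⟩ : FellCloseds G) ∈ t → t ∈ 𝒰 := by
    intro t ht
    induction ht with
    | basic s hs =>
      intro hFs
      rcases hs with ⟨K, hK, rfl⟩ | ⟨U, hU, rfl⟩
      · -- miss set
        have hdisj : Disjoint F0 K := hFs
        have hpt : ∀ x ∈ K, ∃ U : Set G, IsOpen U ∧ x ∈ U ∧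
            {F : FellCloseds G | (F.1 ∩ U).Nonempty} ∉ 𝒰 := by
          intro x hx
          have hxF : x ∉ F0 := fun h => Set.disjoint_left.1 hdisj h hx
          simpa only [hF0def, mem_setOf_eq, not_forall, exists_prop, exists_and_left] using hxF
        choose U hUopen hUx hUnot using hpt
        obtain ⟨t, hcov⟩ := hK.elim_nhds_subcover' (fun x hx => U x hx)
          (fun x hx => (hUopen x hx).mem_nhds (hUx x hx))
        have hmem : (⋂ x ∈ t, {F : FellCloseds G | (F.1 ∩ U x.1 x.2).Nonempty}ᶜ)
            ∈ (𝒰 : Filter (FellCloseds G)) := by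
          refine (Filter.biInter_finset_mem t).2 fun x _ => ?_
          exact (Ultrafilter.compl_mem_iff_notMem.2 (hUnot x.1 x.2))
        refine Filter.mem_of_superset hmem ?_
        intro F hF
        simp only [mem_iInter, mem_compl_iff, mem_setOf_eq] at hF
        refine Set.disjoint_left.2 fun a haF haK => ?_
        obtain ⟨x, hxt, hax⟩ := Set.mem_iUnion₂.1 (hcov haK)
        exact hF x hxt ⟨a, haF, hax⟩
      · -- hit set
        obtain ⟨x, hxF0, hxU⟩ := hFs
        exact hxF0 U hU hxU
    | univ => exact fun _ => Filter.univ_mem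
    | inter s₁ s₂ _ _ ih₁ ih₂ => exact fun h => Filter.inter_mem (ih₁ h.1) (ih₂ h.2)
    | sUnion S _ ih =>
      intro h
      obtain ⟨s, hsS, hFs⟩ := h
      exact Filter.mem_of_superset (ih s hsS hFs) (Set.subset_sUnion_of_mem hsS)
  refine ⟨⟨F0, hF0⟩, mem_univ _, fun s hs => ?_⟩
  obtain ⟨u, hus, huo, hFu⟩ := mem_nhds_iff.1 hs
  exact Filter.mem_of_superset (key u huo hFu) hus

lemma fell_sep [T2Space G] [LocallyCompactSpace G] {F F' : FellCloseds G} {x : G}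
    (hxF : x ∈ F.1) (hxF' : x ∉ F'.1) :
    ∃ u v : Set (FellCloseds G), IsOpen u ∧ IsOpen v ∧ F ∈ u ∧ F' ∈ v ∧ Disjoint u v := by
  have hmem : F'.1ᶜ ∈ 𝓝 x := F'.2.isOpen_compl.mem_nhds hxF'
  obtain ⟨K, hKnhds, hKsub, hKcomp⟩ := local_compact_nhds hmem
  refine ⟨{F'' | (F''.1 ∩ interior K).Nonempty}, {F'' | Disjoint F''.1 K},
    fell_open_hit isOpen_interior, fell_open_miss hKcomp,
    ⟨x, hxF, mem_interior_iff_mem_nhds.2 hKnhds⟩,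
    Set.disjoint_left.2 fun a ha haK => hKsub haK ha, ?_⟩
  refine Set.disjoint_left.2 fun F'' h1 h2 => ?_
  obtain ⟨a, haF, haI⟩ := h1
  exact Set.disjoint_left.1 h2 haF (interior_subset haI)

lemma fell_t2 [T2Space G] [LocallyCompactSpace G] : T2Space (FellCloseds G) := by
  constructor
  intro F F' hne
  have hne' : F.1 ≠ F'.1 := fun h => hne (Subtype.ext h)
  by_cases h : F.1 ⊆ F'.1
  · obtain ⟨x, hx1, hx2⟩ := Set.not_subset.1 (fun h' => hne' (Set.Subset.antisymm h h'))
    obtain ⟨u, v, hu, hv, hFu, hFv, hd⟩ := fell_sep hx1 hx2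
    exact ⟨v, u, hv, hu, hFv, hFu, hd.symm⟩
  · obtain ⟨x, hx1, hx2⟩ := Set.not_subset.1 h
    exact fell_sep hx1 hx2

lemma emptyFell_notMem (gp : TopGroupoid G) :
    (⟨∅, isClosed_empty⟩ : FellCloseds G) ∉ sigmaZero gp := by
  rintro ⟨u, _, _, huH, _⟩
  exact huH

lemma sigma_union_closed [T2Space G] [LocallyCompactSpace G] (gp : TopGroupoid G) :
    IsClosed (sigmaZero gp ∪ {(⟨∅, isClosed_empty⟩ : FellCloseds G)}) := by
  rw [← isOpen_compl_iff]
  refine isOpen_iff_forall_mem_open.2 fun F hF => ?_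
  simp only [mem_compl_iff, Set.mem_union, Set.mem_singleton_iff, not_or] at hF
  obtain ⟨hFs, hFne⟩ := hF
  have hne : F.1.Nonempty := by
    rcases Set.eq_empty_or_nonempty F.1 with h | h
    · exact absurd (Subtype.ext h) hFne
    · exact h
  by_cases hi : ∀ x ∈ F.1, gp.src x = gp.rng x
  · by_cases hii : ∀ x ∈ F.1, ∀ y ∈ F.1, gp.src x = gp.src y
    · by_cases hiii : ∀ x ∈ F.1, gp.inv x ∈ F.1
      · by_cases hiv : ∀ x ∈ F.1, ∀ y ∈ F.1, gp.comp x y ∈ F.1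
        ·
          exfalso
          obtain ⟨x₀, hx₀⟩ := hne
          apply hFs
          refine ⟨gp.src x₀, F.2, gp.src_src x₀, ?_, ?_, hiii, hiv⟩
          · have : gp.rng x₀ = gp.src x₀ := (hi x₀ hx₀).symm
            have h1 : gp.comp x₀ (gp.inv x₀) ∈ F.1 := hiv x₀ hx₀ _ (hiii x₀ hx₀)
            rwa [gp.comp_inv, this] at h1
          · exact fun x hx => ⟨hii x hx x₀ hx₀, (hi x hx).symm ▸ hii x hx x₀ hx₀⟩
        · -- composition escapes
          push_neg at hiv
          obtain ⟨x, hx, y, hy, hz⟩ := hiv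
          have hmem : F.1ᶜ ∈ 𝓝 (gp.comp x y) := F.2.isOpen_compl.mem_nhds hz
          obtain ⟨K, hKnhds, hKsub, hKcomp⟩ := local_compact_nhds hmem
          have hxy : gp.src x = gp.rng y := by
            rw [hii x hx y hy]; exact hi y hy
          -- continuity of composition at ⟨(x,y), hxy⟩
          have hzW : gp.comp x y ∈ interior K := mem_interior_iff_mem_nhds.2 hKnhds
          have hc := gp.continuous_comp.continuousAt
            (x := (⟨(x, y), hxy⟩ : {p : G × G // gp.src p.1 = gp.rng p.2}))
          have hpre : (fun p : {p : G × G // gp.src p.1 = gp.rng p.2} =>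
              gp.comp p.1.1 p.1.2) ⁻¹' (interior K)
                ∈ 𝓝 (⟨(x, y), hxy⟩ : {p : G × G // gp.src p.1 = gp.rng p.2}) :=
            hc (isOpen_interior.mem_nhds hzW)
          rw [nhds_subtype_eq_comap, Filter.mem_comap] at hpre
          obtain ⟨t, htn, htsub⟩ := hpre
          obtain ⟨U₁, U₂, hU₁, hxU₁, hU₂, hyU₂, hprod⟩ := mem_nhds_prod_iff'.1 htn
          refine ⟨{F' | (F'.1 ∩ U₁).Nonempty} ∩ {F' | (F'.1 ∩ U₂).Nonempty} ∩
              {F' | Disjoint F'.1 K}, ?_, ((fell_open_hit hU₁).inter (fell_open_hit hU₂)).inter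
              (fell_open_miss hKcomp), ⟨⟨⟨x, hx, hxU₁⟩, ⟨y, hy, hyU₂⟩⟩,
              Set.disjoint_left.2 fun a ha haK => hKsub haK ha⟩⟩
          rintro F' ⟨⟨⟨a, haF, haU⟩, ⟨b, hbF, hbU⟩⟩, hdisj⟩
          simp only [mem_compl_iff, Set.mem_union, Set.mem_singleton_iff, not_or]
          constructor
          · rintro ⟨u', _, _, _, hsr', _, hcomp'⟩
            have hab : gp.src a = gp.rng b := by
              rw [(hsr' a haF).1, (hsr' b hbF).2]
            have : gp.comp a b ∈ interior K :=
              htsub (hprod (Set.mk_mem_prod haU hbU) :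
                ((⟨(a, b), hab⟩ : {p : G × G // gp.src p.1 = gp.rng p.2}) : G × G) ∈ t)
            exact Set.disjoint_left.1 hdisj (hcomp' a haF b hbF) (interior_subset this)
          · intro h
            rw [h] at haF
            exact haF
      · -- inverse escapes
        push_neg at hiii
        obtain ⟨x, hx, hz⟩ := hiii
        have hmem : F.1ᶜ ∈ 𝓝 (gp.inv x) := F.2.isOpen_compl.mem_nhds hz
        obtain ⟨K, hKnhds, hKsub, hKcomp⟩ := local_compact_nhds hmem
        have hzW : gp.inv x ∈ interior K := mem_interior_iff_mem_nhds.2 hKnhds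
        have hpre : gp.inv ⁻¹' (interior K) ∈ 𝓝 x :=
          gp.continuous_inv.continuousAt (isOpen_interior.mem_nhds hzW)
        obtain ⟨U, hUsub, hU, hxU⟩ := mem_nhds_iff.1 hpre
        refine ⟨{F' | (F'.1 ∩ U).Nonempty} ∩ {F' | Disjoint F'.1 K}, ?_,
          (fell_open_hit hU).inter (fell_open_miss hKcomp),
          ⟨⟨x, hx, hxU⟩, Set.disjoint_left.2 fun a ha haK => hKsub haK ha⟩⟩
        rintro F' ⟨⟨a, haF, haU⟩, hdisj⟩
        simp only [mem_compl_iff, Set.mem_union, Set.mem_singleton_iff, not_or]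
        constructor
        · rintro ⟨u', _, _, _, _, hinv', _⟩
          exact Set.disjoint_left.1 hdisj (hinv' a haF) (interior_subset (hUsub haU))
        · intro h
          rw [h] at haF
          exact haF
    · -- two different units
      push_neg at hii
      obtain ⟨x, hx, y, hy, hne'⟩ := hii
      obtain ⟨V, W, hV, hW, hsV, hsW, hVW⟩ := t2_separation hne'
      have h1 : gp.src ⁻¹' V ∈ 𝓝 x := gp.continuous_src.continuousAt (hV.mem_nhds hsV)
      have h2 : gp.src ⁻¹' W ∈ 𝓝 y := gp.continuous_src.continuousAt (hW.mem_nhds hsW)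
      obtain ⟨U₁, hU₁sub, hU₁, hxU₁⟩ := mem_nhds_iff.1 h1
      obtain ⟨U₂, hU₂sub, hU₂, hyU₂⟩ := mem_nhds_iff.1 h2
      refine ⟨{F' | (F'.1 ∩ U₁).Nonempty} ∩ {F' | (F'.1 ∩ U₂).Nonempty}, ?_,
        (fell_open_hit hU₁).inter (fell_open_hit hU₂),
        ⟨⟨x, hx, hxU₁⟩, ⟨y, hy, hyU₂⟩⟩⟩
      rintro F' ⟨⟨a, haF, haU⟩, ⟨b, hbF, hbU⟩⟩
      simp only [mem_compl_iff, Set.mem_union, Set.mem_singleton_iff, not_or]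
      constructor
      · rintro ⟨u', _, _, _, hsr', _, _⟩
        have ha : gp.src a ∈ V := hU₁sub haU
        have hb : gp.src b ∈ W := hU₂sub hbU
        rw [(hsr' a haF).1] at ha
        rw [(hsr' b hbF).1] at hb
        exact Set.disjoint_left.1 hVW ha hb
      · intro h
        rw [h] at haF
        exact haF
  · -- some element has src ≠ rng
    push_neg at hi
    obtain ⟨x, hx, hne'⟩ := hi
    obtain ⟨V, W, hV, hW, hsV, hrW, hVW⟩ := t2_separation hne'
    have h1 : gp.src ⁻¹' V ∩ gp.rng ⁻¹' W ∈ 𝓝 x :=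
      Filter.inter_mem (gp.continuous_src.continuousAt (hV.mem_nhds hsV))
        (gp.continuous_rng.continuousAt (hW.mem_nhds hrW))
    obtain ⟨U, hUsub, hU, hxU⟩ := mem_nhds_iff.1 h1
    refine ⟨{F' | (F'.1 ∩ U).Nonempty}, ?_, fell_open_hit hU, ⟨x, hx, hxU⟩⟩
    rintro F' ⟨a, haF, haU⟩
    simp only [mem_compl_iff, Set.mem_union, Set.mem_singleton_iff, not_or]
    constructor
    · rintro ⟨u', _, _, _, hsr', _, _⟩
      have ha : gp.src a ∈ V := (hUsub haU).1
      have hb : gp.rng a ∈ W := (hUsub haU).2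
      rw [(hsr' a haF).1] at ha
      rw [(hsr' a haF).2] at hb
      exact Set.disjoint_left.1 hVW ha hb
    · intro h
      rw [h] at haF
      exact haF

/-- For a locally compact Hausdorff groupoid `G`, the set `Σ⁰` of closed
subgroups of isotropy groups, with the Fell topology, is locally compact Hausdorff, and
`Σ⁰ ∪ {∅}` is compact in the space of closed subsets of `G`. -/
theorem stmt2 [T2Space G] [LocallyCompactSpace G] (gp : TopGroupoid G) :
    LocallyCompactSpace (sigmaZero gp) ∧ T2Space (sigmaZero gp) ∧
      IsCompact (sigmaZero gp ∪ {(⟨∅, isClosed_empty⟩ : FellCloseds G)}) := by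
  haveI hcs : CompactSpace (FellCloseds G) := fell_compactSpace
  haveI ht2 : T2Space (FellCloseds G) := fell_t2
  haveI hlc : LocallyCompactSpace (FellCloseds G) :=
    WeaklyLocallyCompactSpace.locallyCompactSpace
  have hclosed := sigma_union_closed gp
  have hlocc : IsLocallyClosed (sigmaZero gp) := by
    refine ⟨{(⟨∅, isClosed_empty⟩ : FellCloseds G)}ᶜ,
      sigmaZero gp ∪ {(⟨∅, isClosed_empty⟩ : FellCloseds G)},
      isClosed_singleton.isOpen_compl, hclosed, ?_⟩
    ext F
    simp only [Set.mem_inter_iff, Set.mem_compl_iff, Set.mem_union, Set.mem_singleton_iff]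
    constructor
    · intro h
      refine ⟨?_, Or.inl h⟩
      intro he
      rw [he] at h
      exact emptyFell_notMem gp h
    · rintro ⟨h1, h2 | h2⟩
      · exact h2
      · exact absurd h2 h1
  exact ⟨hlocc.locallyCompactSpace, inferInstance, hclosed.isCompact⟩
end

section
/- Let G be a locally compact Hausdorff group with a net {φᵢ} ⊆ C_c(G) such that ∫|φᵢ(γ)|²dγ is uniformly bounded and φᵢ*φᵢ* converges to 1 uniformly on compact sets. Then G is amenable (in the usual sense for locally compact groups). -/
open MeasureTheory Filter
open scoped ENNReal BoundedContinuousFunction Pointwise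

open scoped Classical in
noncomputable def ulim {ι : Type} (U : Ultrafilter ι) (u : ι → ℝ) : ℝ :=
  if h : ∃ L, Tendsto u ↑U (nhds L) then h.choose else 0

lemma ulim_spec {ι : Type} {U : Ultrafilter ι} {u : ι → ℝ}
    (h : ∃ L, Tendsto u ↑U (nhds L)) : Tendsto u ↑U (nhds (ulim U u)) := by
  classical
  rw [ulim]
  rw [dif_pos h]
  exact h.choose_spec

lemma ulim_exists {ι : Type} {U : Ultrafilter ι} {u : ι → ℝ} {M : ℝ}
    (h : ∀ᶠ i in ↑U, |u i| ≤ M) : ∃ L, Tendsto u ↑U (nhds L) := by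
  obtain ⟨a, -, ha⟩ := (isCompact_Icc (a := -M) (b := M)).ultrafilter_le_nhds (U.map u)
    (by
      rw [le_principal_iff, Ultrafilter.mem_coe, Ultrafilter.mem_map]
      filter_upwards [h] with i hi using abs_le.1 hi)
  exact ⟨a, ha⟩

lemma ulim_eq {ι : Type} {U : Ultrafilter ι} {u : ι → ℝ} {L : ℝ}
    (h : Tendsto u ↑U (nhds L)) : ulim U u = L :=
  tendsto_nhds_unique (ulim_spec ⟨L, h⟩) h

lemma hasCompactSupport_sub {α β : Type*} [TopologicalSpace α] [AddGroup β]
    {f g : α → β} (hf : HasCompactSupport f) (hg : HasCompactSupport g) :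
    HasCompactSupport (fun x => f x - g x) := by
  exact IsCompact.of_isClosed_subset (IsCompact.union hf hg) (isClosed_tsupport _) (tsupport_sub f g)

lemma norm_sub_sq_complex (z w : ℂ) :
    ‖z - w‖ ^ 2 = ‖z‖ ^ 2 + ‖w‖ ^ 2 - 2 * (z * (starRingEnd ℂ) w).re := by
  have h : ∀ u : ℂ, ‖u‖ ^ 2 = u.re ^ 2 + u.im ^ 2 := fun u => by
    rw [Complex.sq_norm, Complex.normSq_apply]; ring
  simp only [h, Complex.sub_re, Complex.sub_im, Complex.mul_re, Complex.conj_re, Complex.conj_im]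
  ring

lemma cont_right_translate_integral {G : Type} [Group G] [TopologicalSpace G]
    [IsTopologicalGroup G] [T2Space G] [LocallyCompactSpace G] [MeasurableSpace G] [BorelSpace G]
    (μ : Measure G) [IsFiniteMeasureOnCompacts μ] {f : G → ℝ}
    (hf : Continuous f) (h'f : HasCompactSupport f) :
    Continuous fun g => ∫ x, f (x * g) ∂μ := by
  rw [continuous_iff_continuousAt]; intro g₀
  obtain ⟨t, t_comp, ht⟩ := exists_compact_mem_nhds g₀
  have : ContinuousOn (fun g => ∫ x, f (x * g) ∂μ) t := by
    apply continuousOn_integral_of_compact_support (h'f.mul t_comp.inv)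
    · exact (hf.comp (continuous_snd.mul continuous_fst)).continuousOn
    · intro p x hp hx
      by_contra h
      exact hx ⟨x * p, subset_tsupport _ h, p⁻¹, Set.inv_mem_inv.2 hp, by group⟩
  exact this.continuousAt ht

lemma two_re_mul_conj_le (z w : ℂ) : 2 * (z * (starRingEnd ℂ) w).re ≤ ‖z‖ ^ 2 + ‖w‖ ^ 2 := by
  have h1 : (z * (starRingEnd ℂ) w).re ≤ ‖z * (starRingEnd ℂ) w‖ := Complex.re_le_norm _
  have h2 : ‖z * (starRingEnd ℂ) w‖ = ‖z‖ * ‖w‖ := by rw [norm_mul, RCLike.norm_conj]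
  nlinarith [norm_nonneg z, norm_nonneg w, sq_nonneg (‖z‖ - ‖w‖)]

set_option maxHeartbeats 1000000 in
/-- Let `G` be a locally compact Hausdorff group with a net
`{φᵢ} ⊆ C_c(G)` such that `∫ |φᵢ|² dγ` is uniformly bounded and `φᵢ * φᵢ*` converges to
`1` uniformly on compact sets (Renault's groupoid amenability condition specialized to
groups; here `φ*(γ) = Δ(γ)⁻¹ conj (φ(γ⁻¹))` with `Δ` the modular function).  Then `G`
is amenable: there is a left-invariant mean on the bounded continuous functions. -/
theorem stmt18 {G : Type} [Group G] [TopologicalSpace G] [IsTopologicalGroup G]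
    [T2Space G] [LocallyCompactSpace G] [MeasurableSpace G] [BorelSpace G]
    (μ : Measure G) [μ.IsHaarMeasure]
    (Δ : G → ℝ≥0∞) (hΔpos : ∀ g, Δ g ≠ 0 ∧ Δ g ≠ ∞)
    (hΔ : ∀ g : G, Measure.map (fun x => x * g) μ = (Δ g)⁻¹ • μ)
    {ι : Type} (l : Filter ι) [l.NeBot]
    (φ : ι → G → ℂ)
    (hcont : ∀ i, Continuous (φ i)) (hcs : ∀ i, HasCompactSupport (φ i))
    (hbd : ∃ C : ℝ, ∀ i, ∫ γ, ‖φ i γ‖ ^ 2 ∂μ ≤ C)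
    (hconv : ∀ K : Set G, IsCompact K →
      TendstoUniformlyOn
        (fun i γ => ∫ η, φ i η * (((Δ (η⁻¹ * γ)).toReal)⁻¹ : ℂ) *
          (starRingEnd ℂ) (φ i (γ⁻¹ * η)) ∂μ)
        1 l K) :
    ∃ m : (G →ᵇ ℝ) →ₗ[ℝ] ℝ,
      m 1 = 1 ∧ (∀ f : G →ᵇ ℝ, (∀ x, 0 ≤ f x) → 0 ≤ m f) ∧
      ∀ (g : G) (f : G →ᵇ ℝ),
        m (f.compContinuous ⟨fun x => g * x, continuous_mul_left g⟩) = m f := by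
  classical
  have hDpos : ∀ g, 0 < (Δ g).toReal :=
    fun g => ENNReal.toReal_pos (hΔpos g).1 (hΔpos g).2
  have htr : ∀ (g : G) (f : G → ℝ), Continuous f →
      ∫ x, f (x * g) ∂μ = ((Δ g).toReal)⁻¹ * ∫ x, f x ∂μ := by
    intro g f hf
    have h1 : ∫ x, f (x * g) ∂μ = ∫ y, f y ∂(Measure.map (fun x => x * g) μ) :=
      (integral_map (measurable_mul_const g).aemeasurable
        (hf.aestronglyMeasurable (μ := Measure.map (fun x => x * g) μ))).symm
    rw [h1, hΔ g, integral_smul_measure, ENNReal.toReal_inv, smul_eq_mul]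
  obtain ⟨f₀, f₀_comp, f₀_nonneg, f₀_ne⟩ := exists_continuous_nonneg_pos (1 : G)
  have f₀cont : Continuous f₀ := f₀.continuous
  set c := ∫ x, (f₀ : G → ℝ) x ∂μ with hc
  have hcpos : 0 < c :=
    f₀cont.integral_pos_of_hasCompactSupport_nonneg_nonzero f₀_comp f₀_nonneg f₀_ne
  have hψ : ∀ g, ∫ x, (f₀ : G → ℝ) (x * g) ∂μ = ((Δ g).toReal)⁻¹ * c := fun g => htr g _ f₀cont
  have hmul : ∀ g h : G, (Δ (g * h)).toReal = (Δ g).toReal * (Δ h).toReal := by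
    intro g h
    have h2 : ∫ x, (f₀ : G → ℝ) (x * (g * h)) ∂μ = ((Δ g).toReal)⁻¹ * (((Δ h).toReal)⁻¹ * c) := by
      calc ∫ x, (f₀ : G → ℝ) (x * (g * h)) ∂μ
          = ∫ x, (fun y => (f₀ : G → ℝ) (y * h)) (x * g) ∂μ := by simp_rw [mul_assoc]
        _ = ((Δ g).toReal)⁻¹ * ∫ y, (f₀ : G → ℝ) (y * h) ∂μ :=
            htr g _ (f₀cont.comp (continuous_mul_right h))
        _ = ((Δ g).toReal)⁻¹ * (((Δ h).toReal)⁻¹ * c) := by rw [hψ h]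
    rw [hψ (g * h)] at h2
    have hcne : c ≠ 0 := ne_of_gt hcpos
    have pg := (hDpos g).ne'; have ph := (hDpos h).ne'; have pgh := (hDpos (g * h)).ne'
    have h3 : ((Δ (g * h)).toReal)⁻¹ = ((Δ g).toReal)⁻¹ * ((Δ h).toReal)⁻¹ :=
      mul_right_cancel₀ hcne (h2.trans (mul_assoc _ _ _).symm)
    rw [← mul_inv] at h3
    exact inv_injective h3
  have hD1 : (Δ 1).toReal = 1 := by
    have h2 := hψ 1
    simp only [mul_one] at h2
    rw [← hc] at h2
    have := hDpos 1
    field_simp at h2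
    linarith
  have hDinv : ∀ g : G, (Δ g⁻¹).toReal = ((Δ g).toReal)⁻¹ := by
    intro g
    have h2 : (Δ g).toReal * (Δ g⁻¹).toReal = 1 := by rw [← hmul, mul_inv_cancel, hD1]
    exact eq_inv_of_mul_eq_one_left (by rw [mul_comm] at h2; exact h2)
  have hDcont : Continuous (fun g => (Δ g).toReal) := by
    have hψc : Continuous fun g => ∫ x, (f₀ : G → ℝ) (x * g) ∂μ :=
      cont_right_translate_integral μ f₀cont f₀_comp
    have hDeq : (fun g : G => (Δ g).toReal) = fun g => c * (∫ x, (f₀ : G → ℝ) (x * g) ∂μ)⁻¹ := by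
      funext g
      rw [hψ g]
      have := hDpos g
      field_simp
    rw [show (fun g : G => (Δ g).toReal) = fun g => c * (∫ x, (f₀ : G → ℝ) (x * g) ∂μ)⁻¹ from hDeq]
    refine continuous_const.mul (hψc.inv₀ fun g => ?_)
    rw [hψ g]
    have := hDpos g
    positivity
  have hmulD : ∀ g h : G, (Δ (g * h)).toReal = (Δ g).toReal * (Δ h).toReal := hmul
  have hDinv' : ∀ g : G, (Δ g⁻¹).toReal = ((Δ g).toReal)⁻¹ := hDinv
  set F : ι → G → ℂ := fun i γ => ∫ η, φ i η * (((Δ (η⁻¹ * γ)).toReal)⁻¹ : ℂ) *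
      (starRingEnd ℂ) (φ i (γ⁻¹ * η)) ∂μ with hFdef
  have hFlim : ∀ γ, Tendsto (fun i => F i γ) l (nhds 1) := by
    intro γ
    have := (hconv {γ} isCompact_singleton).tendsto_at (Set.mem_singleton γ)
    simpa using this
  have hD1 : ∀ g, (Δ g).toReal = 1 := by
    set ξ : ι → G → ℂ := fun i η => φ i η * ((Real.sqrt ((Δ η).toReal)) : ℂ) with hξdef
    have ξcont : ∀ i, Continuous (ξ i) := fun i =>
      (hcont i).mul (Complex.continuous_ofReal.comp (Real.continuous_sqrt.comp hDcont))
    have ξcs : ∀ i, HasCompactSupport (ξ i) := fun i => (hcs i).mul_right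
    -- integrability facts
    have hint2 : ∀ i, Integrable (fun η => ‖ξ i η‖ ^ 2) μ :=
      fun i => ((ξcont i).norm.pow 2).integrable_of_hasCompactSupport
        ((ξcs i).comp_left (g := fun z : ℂ => ‖z‖ ^ 2) (by simp) :)
    have hcsl : ∀ i (g : G), HasCompactSupport (fun η => ξ i (g⁻¹ * η)) :=
      fun i g => (ξcs i).comp_homeomorph (Homeomorph.mulLeft g⁻¹)
    have hint2' : ∀ i (g : G), Integrable (fun η => ‖ξ i (g⁻¹ * η)‖ ^ 2) μ :=
      fun i g => (((ξcont i).comp (continuous_mul_left g⁻¹)).norm.pow 2).integrable_of_hasCompactSupport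
        ((hcsl i g).comp_left (g := fun z : ℂ => ‖z‖ ^ 2) (by simp) :)
    have hintK : ∀ i (g : G), Integrable (fun η => ξ i (g⁻¹ * η) * (starRingEnd ℂ) (ξ i η)) μ := by
      intro i g
      exact (((ξcont i).comp (continuous_mul_left g⁻¹)).mul
        ((Complex.continuous_conj).comp (ξcont i))).integrable_of_hasCompactSupport
        ((hcsl i g).mul_right)
    -- value at 1
    have ha : ∀ i, F i 1 = ((∫ η, ‖ξ i η‖ ^ 2 ∂μ : ℝ) : ℂ) := by
      intro i
      have hcoe : (∫ η, ((‖ξ i η‖ ^ 2 : ℝ) : ℂ) ∂μ) = ((∫ η, ‖ξ i η‖ ^ 2 ∂μ : ℝ) : ℂ) :=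
        integral_ofReal
      rw [hFdef, ← hcoe]
      refine integral_congr_ae (Filter.Eventually.of_forall fun η => ?_)
      simp only [mul_one, inv_one, one_mul]
      have h1 : ‖ξ i η‖ ^ 2 = ‖φ i η‖ ^ 2 * (Δ η).toReal := by
        rw [hξdef]
        simp only []
        rw [norm_mul, mul_pow, Complex.norm_real, Real.norm_eq_abs, sq_abs,
          Real.sq_sqrt (hDpos η).le]
      have h2 : ((((Δ η⁻¹).toReal) : ℂ))⁻¹ = (((Δ η).toReal) : ℂ) := by
        rw [← Complex.ofReal_inv, hDinv η, inv_inv]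
      rw [h1, h2, mul_comm (φ i η) _, mul_assoc, Complex.mul_conj]
      push_cast [Complex.normSq_eq_norm_sq]
      ring
    -- the kernel identity
    have hb : ∀ i (g : G), ∫ η, ξ i (g⁻¹ * η) * (starRingEnd ℂ) (ξ i η) ∂μ
        = ((Real.sqrt ((Δ g).toReal)) : ℂ) * (starRingEnd ℂ) (F i g) := by
      intro i g
      rw [hFdef, ← integral_conj, ← integral_const_mul]
      refine integral_congr_ae (Filter.Eventually.of_forall fun η => ?_)
      simp only [map_mul, map_inv₀, Complex.conj_ofReal, Complex.conj_conj]
      have hr : Real.sqrt ((Δ (g⁻¹ * η)).toReal) * Real.sqrt ((Δ η).toReal)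
          = Real.sqrt ((Δ g).toReal) * (((Δ (η⁻¹ * g)).toReal)⁻¹) := by
        have hg := hDpos g; have hη := hDpos η
        have e1 : (Δ (g⁻¹ * η)).toReal = ((Δ g).toReal)⁻¹ * (Δ η).toReal := by
          rw [hmulD, hDinv]
        have e2 : (Δ (η⁻¹ * g)).toReal = ((Δ η).toReal)⁻¹ * (Δ g).toReal := by
          rw [hmulD, hDinv]
        rw [e1, e2, Real.sqrt_mul (by positivity), Real.sqrt_inv]
        rw [mul_assoc, Real.mul_self_sqrt hη.le]
        rw [mul_inv, inv_inv]
        have hsg : Real.sqrt ((Δ g).toReal) * Real.sqrt ((Δ g).toReal) = (Δ g).toReal :=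
          Real.mul_self_sqrt hg.le
        field_simp
        nlinarith [hsg, Real.sqrt_nonneg ((Δ g).toReal)]
      have hrC : ((Real.sqrt ((Δ (g⁻¹ * η)).toReal) : ℝ) : ℂ) * ((Real.sqrt ((Δ η).toReal) : ℝ) : ℂ)
          = ((Real.sqrt ((Δ g).toReal) : ℝ) : ℂ) * (((((Δ (η⁻¹ * g)).toReal) : ℝ) : ℂ))⁻¹ := by
        rw [← Complex.ofReal_inv, ← Complex.ofReal_mul, ← Complex.ofReal_mul, hr]
      rw [hξdef]
      simp only [map_mul, map_inv₀, Complex.conj_ofReal, Complex.conj_conj]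
      linear_combination (φ i (g⁻¹ * η) * (starRingEnd ℂ) (φ i η)) * hrC
    -- invariance of the L² norm
    have hIinv : ∀ i (g : G), ∫ η, ‖ξ i (g⁻¹ * η)‖ ^ 2 ∂μ = ∫ η, ‖ξ i η‖ ^ 2 ∂μ :=
      fun i g => integral_mul_left_eq_self (fun η => ‖ξ i η‖ ^ 2) g⁻¹
    -- key inequality
    have hker : ∀ (g : G) i, Real.sqrt ((Δ g).toReal) * (F i g).re ≤ (F i 1).re := by
      intro g i
      have hre : Real.sqrt ((Δ g).toReal) * (F i g).re
          = ∫ η, (ξ i (g⁻¹ * η) * (starRingEnd ℂ) (ξ i η)).re ∂μ := by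
        have hre' := integral_re (hintK i g)
        simp only [RCLike.re_to_complex] at hre'
        rw [hre', hb i g]
        simp [Complex.conj_re]
      have hmono : ∫ η, 2 * (ξ i (g⁻¹ * η) * (starRingEnd ℂ) (ξ i η)).re ∂μ
          ≤ ∫ η, (‖ξ i (g⁻¹ * η)‖ ^ 2 + ‖ξ i η‖ ^ 2) ∂μ := by
        refine integral_mono (((hintK i g).re).const_mul 2) ((hint2' i g).add (hint2 i))
          fun η => two_re_mul_conj_le _ _
      rw [integral_const_mul, integral_add (hint2' i g) (hint2 i), hIinv i g] at hmono
      have hare : (F i 1).re = ∫ η, ‖ξ i η‖ ^ 2 ∂μ := by rw [ha i, Complex.ofReal_re]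
      rw [← hre] at hmono
      linarith
    have hle : ∀ g : G, Real.sqrt ((Δ g).toReal) ≤ 1 := by
      intro g
      have h1 : Tendsto (fun i => Real.sqrt ((Δ g).toReal) * (F i g).re) l
          (nhds (Real.sqrt ((Δ g).toReal) * 1)) := by
        exact tendsto_const_nhds.mul ((Complex.continuous_re.tendsto 1).comp (hFlim g))
      have h2 : Tendsto (fun i => (F i 1).re) l (nhds ((1 : ℂ).re)) :=
        (Complex.continuous_re.tendsto 1).comp (hFlim 1)
      have := le_of_tendsto_of_tendsto' h1 h2 (hker g)
      simpa using this
    intro g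
    have h1 : (Δ g).toReal ≤ 1 := by
      have := hle g
      nlinarith [Real.sq_sqrt (hDpos g).le, Real.sqrt_nonneg ((Δ g).toReal)]
    have h2 : (Δ g⁻¹).toReal ≤ 1 := by
      have := hle g⁻¹
      nlinarith [Real.sq_sqrt (hDpos g⁻¹).le, Real.sqrt_nonneg ((Δ g⁻¹).toReal)]
    rw [hDinv g] at h2
    have := hDpos g
    have h3 : 1 ≤ (Δ g).toReal := by
      have h4 := mul_le_mul_of_nonneg_left h2 this.le
      rw [mul_inv_cancel₀ this.ne', mul_one] at h4
      exact h4
    linarith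
  -- basic integrability
  have hsq_cs : ∀ i, HasCompactSupport (fun η => ‖φ i η‖ ^ 2) :=
    fun i => (hcs i).comp_left (g := fun z : ℂ => ‖z‖ ^ 2) (by simp)
  have hφint2 : ∀ i, Integrable (fun η => ‖φ i η‖ ^ 2) μ :=
    fun i => ((hcont i).norm.pow 2).integrable_of_hasCompactSupport (hsq_cs i)
  have hcsl : ∀ i (g : G), HasCompactSupport (fun η => φ i (g⁻¹ * η)) :=
    fun i g => (hcs i).comp_homeomorph (Homeomorph.mulLeft g⁻¹)
  have hcontl : ∀ i (g : G), Continuous (fun η => φ i (g⁻¹ * η)) :=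
    fun i g => (hcont i).comp (continuous_mul_left g⁻¹)
  have hsql_cs : ∀ i (g : G), HasCompactSupport (fun η => ‖φ i (g⁻¹ * η)‖ ^ 2) :=
    fun i g => (hcsl i g).comp_left (g := fun z : ℂ => ‖z‖ ^ 2) (by simp)
  have hφint2' : ∀ i (g : G), Integrable (fun η => ‖φ i (g⁻¹ * η)‖ ^ 2) μ :=
    fun i g => ((hcontl i g).norm.pow 2).integrable_of_hasCompactSupport (hsql_cs i g)
  have hintK : ∀ i (g : G), Integrable (fun η => φ i (g⁻¹ * η) * (starRingEnd ℂ) (φ i η)) μ :=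
    fun i g => ((hcontl i g).mul ((Complex.continuous_conj).comp
      (hcont i))).integrable_of_hasCompactSupport ((hcsl i g).mul_right)
  set n : ι → ℝ := fun i => ∫ η, ‖φ i η‖ ^ 2 ∂μ with hndef
  have hn0 : ∀ i, 0 ≤ n i := fun i => integral_nonneg fun η => by positivity
  have hFone : ∀ i, F i 1 = ((n i : ℝ) : ℂ) := by
    intro i
    have hcoe : (∫ η, ((‖φ i η‖ ^ 2 : ℝ) : ℂ) ∂μ) = ((n i : ℝ) : ℂ) := integral_ofReal
    rw [hFdef, ← hcoe]
    refine integral_congr_ae (Filter.Eventually.of_forall fun η => ?_)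
    simp only [mul_one, one_mul, hD1, Complex.ofReal_one, inv_one]
    rw [Complex.mul_conj]
    push_cast [Complex.normSq_eq_norm_sq]
    ring
  have hn1 : Tendsto n l (nhds 1) := by
    have h : Tendsto (fun i => (F i 1).re) l (nhds ((1 : ℂ).re)) :=
      (Complex.continuous_re.tendsto 1).comp (hFlim 1)
    have he : (fun i => (F i 1).re) = n := by
      funext i; rw [hFone i, Complex.ofReal_re]
    rw [he] at h
    simpa using h
  have hFg : ∀ i (g : G),
      ∫ η, φ i (g⁻¹ * η) * (starRingEnd ℂ) (φ i η) ∂μ = (starRingEnd ℂ) (F i g) := by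
    intro i g
    rw [hFdef, ← integral_conj]
    refine integral_congr_ae (Filter.Eventually.of_forall fun η => ?_)
    simp only [map_mul, map_inv₀, Complex.conj_ofReal, Complex.conj_conj, hD1,
      Complex.ofReal_one, inv_one, map_one, mul_one]
    ring
  have hFgre : ∀ i (g : G),
      ∫ η, (φ i (g⁻¹ * η) * (starRingEnd ℂ) (φ i η)).re ∂μ = (F i g).re := by
    intro i g
    have h := integral_re (hintK i g)
    simp only [RCLike.re_to_complex] at h
    rw [h, hFg i g, Complex.conj_re]
  have hIinv : ∀ i (g : G), ∫ η, ‖φ i (g⁻¹ * η)‖ ^ 2 ∂μ = n i :=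
    fun i g => integral_mul_left_eq_self (fun η => ‖φ i η‖ ^ 2) g⁻¹
  -- the L² displacement identity
  have hW : ∀ i (g : G), ∫ η, ‖φ i (g⁻¹ * η) - φ i η‖ ^ 2 ∂μ = 2 * n i - 2 * (F i g).re := by
    intro i g
    have h1 : ∫ η, ‖φ i (g⁻¹ * η) - φ i η‖ ^ 2 ∂μ
        = ∫ η, (‖φ i (g⁻¹ * η)‖ ^ 2 + ‖φ i η‖ ^ 2
            - 2 * (φ i (g⁻¹ * η) * (starRingEnd ℂ) (φ i η)).re) ∂μ :=
      integral_congr_ae (Filter.Eventually.of_forall fun η => norm_sub_sq_complex _ _)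
    have ia : Integrable (fun η => ‖φ i (g⁻¹ * η)‖ ^ 2 + ‖φ i η‖ ^ 2) μ :=
      (hφint2' i g).add (hφint2 i)
    have ib0 : Integrable (fun η => (φ i (g⁻¹ * η) * (starRingEnd ℂ) (φ i η)).re) μ :=
      (hintK i g).re
    have ib : Integrable (fun η => 2 * (φ i (g⁻¹ * η) * (starRingEnd ℂ) (φ i η)).re) μ :=
      ib0.const_mul 2
    rw [h1, integral_sub ia ib, integral_add (hφint2' i g) (hφint2 i), integral_const_mul,
      hFgre i g, hIinv i g]
    ring
  -- approximate means
  set T : ι → (G →ᵇ ℝ) → ℝ := fun i f => ∫ η, f η * ‖φ i η‖ ^ 2 ∂μ with hTdef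
  have hTint : ∀ i (f : G →ᵇ ℝ), Integrable (fun η => f η * ‖φ i η‖ ^ 2) μ :=
    fun i f => (f.continuous.mul ((hcont i).norm.pow 2)).integrable_of_hasCompactSupport
      ((hsq_cs i).mul_left)
  have hTbd : ∀ i (f : G →ᵇ ℝ), |T i f| ≤ ‖f‖ * n i := by
    intro i f
    rw [hTdef]
    calc |∫ η, f η * ‖φ i η‖ ^ 2 ∂μ| = ‖∫ η, f η * ‖φ i η‖ ^ 2 ∂μ‖ := (Real.norm_eq_abs _).symm
      _ ≤ ∫ η, ‖f η * ‖φ i η‖ ^ 2‖ ∂μ := norm_integral_le_integral_norm _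
      _ ≤ ∫ η, ‖f‖ * ‖φ i η‖ ^ 2 ∂μ := by
          refine integral_mono (hTint i f).norm ((hφint2 i).const_mul ‖f‖) fun η => ?_
          rw [norm_mul]
          have h2 : ‖‖φ i η‖ ^ 2‖ = ‖φ i η‖ ^ 2 := by
            rw [Real.norm_eq_abs, abs_of_nonneg (sq_nonneg _)]
          rw [h2]
          exact mul_le_mul_of_nonneg_right (f.norm_coe_le_norm η) (sq_nonneg _)
      _ = ‖f‖ * n i := integral_const_mul _ _
  set U : Ultrafilter ι := Ultrafilter.of l with hUdef
  have hUle : (U : Filter ι) ≤ l := Ultrafilter.of_le l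
  have hUn : Tendsto n ↑U (nhds 1) := hn1.mono_left hUle
  have hnbd : ∀ᶠ i in ↑U, n i < 2 := hUn.eventually_lt_const (by norm_num)
  have hex : ∀ f : G →ᵇ ℝ, ∃ L, Tendsto (fun i => T i f) ↑U (nhds L) := by
    intro f
    apply ulim_exists (M := ‖f‖ * 2)
    filter_upwards [hnbd] with i hi
    calc |T i f| ≤ ‖f‖ * n i := hTbd i f
      _ ≤ ‖f‖ * 2 := mul_le_mul_of_nonneg_left hi.le (norm_nonneg f)
  refine ⟨{ toFun := fun f => ulim U (fun i => T i f),
            map_add' := ?_, map_smul' := ?_ }, ?_, ?_, ?_⟩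
  · intro f f'
    apply ulim_eq
    have he : (fun i => T i (f + f')) = fun i => T i f + T i f' := by
      funext i
      simp only [hTdef]
      rw [← integral_add (hTint i f) (hTint i f')]
      refine integral_congr_ae (Filter.Eventually.of_forall fun η => ?_)
      simp [add_mul]
    rw [he]
    exact (ulim_spec (hex f)).add (ulim_spec (hex f'))
  · intro r f
    simp only [RingHom.id_apply, smul_eq_mul]
    apply ulim_eq
    have he : (fun i => T i (r • f)) = fun i => r * T i f := by
      funext i
      simp only [hTdef]
      rw [← integral_const_mul]
      refine integral_congr_ae (Filter.Eventually.of_forall fun η => ?_)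
      simp [mul_assoc]
    rw [he]
    exact (ulim_spec (hex f)).const_mul r
  · apply ulim_eq
    have he : (fun i => T i 1) = n := by
      funext i
      simp only [hTdef, hndef]
      refine integral_congr_ae (Filter.Eventually.of_forall fun η => ?_)
      simp
    rw [he]
    exact hUn
  · intro f hf
    refine ge_of_tendsto' (ulim_spec (hex f)) fun i => ?_
    exact integral_nonneg fun η => mul_nonneg (hf η) (by positivity)
  · intro g f
    set Lf : G →ᵇ ℝ := f.compContinuous ⟨fun x => g * x, continuous_mul_left g⟩ with hLfdef
    have hLf : ∀ η, Lf η = f (g * η) := fun η => rfl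
    have hTL : ∀ i, Integrable (fun η => f η * ‖φ i (g⁻¹ * η)‖ ^ 2) μ :=
      fun i => (f.continuous.mul ((hcontl i g).norm.pow 2)).integrable_of_hasCompactSupport
        ((hsql_cs i g).mul_left)
    have step1 : ∀ i, T i Lf = ∫ η, f η * ‖φ i (g⁻¹ * η)‖ ^ 2 ∂μ := by
      intro i
      have h := integral_mul_left_eq_self (μ := μ) (fun η => f η * ‖φ i (g⁻¹ * η)‖ ^ 2) g
      simp only [inv_mul_cancel_left] at h
      rw [hTdef, ← h]
      exact integral_congr_ae (Filter.Eventually.of_forall fun η => rfl)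
    have step2 : ∀ i, |T i Lf - T i f|
        ≤ ‖f‖ * ∫ η, |‖φ i (g⁻¹ * η)‖ ^ 2 - ‖φ i η‖ ^ 2| ∂μ := by
      intro i
      rw [step1 i, hTdef, ← integral_sub (hTL i) (hTint i f)]
      have habs : Integrable (fun η => |‖φ i (g⁻¹ * η)‖ ^ 2 - ‖φ i η‖ ^ 2|) μ :=
        ((hφint2' i g).sub (hφint2 i)).abs
      calc |∫ η, (f η * ‖φ i (g⁻¹ * η)‖ ^ 2 - f η * ‖φ i η‖ ^ 2) ∂μ|
          = ‖∫ η, (f η * ‖φ i (g⁻¹ * η)‖ ^ 2 - f η * ‖φ i η‖ ^ 2) ∂μ‖ :=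
            (Real.norm_eq_abs _).symm
        _ ≤ ∫ η, ‖f η * ‖φ i (g⁻¹ * η)‖ ^ 2 - f η * ‖φ i η‖ ^ 2‖ ∂μ :=
            norm_integral_le_integral_norm _
        _ ≤ ∫ η, ‖f‖ * |‖φ i (g⁻¹ * η)‖ ^ 2 - ‖φ i η‖ ^ 2| ∂μ := by
            refine integral_mono ((hTL i).sub (hTint i f)).norm (habs.const_mul ‖f‖) fun η => ?_
            rw [Real.norm_eq_abs, ← mul_sub, abs_mul]
            have h1 : |f η| ≤ ‖f‖ := by
              have := f.norm_coe_le_norm η; rwa [Real.norm_eq_abs] at this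
            exact mul_le_mul_of_nonneg_right h1 (abs_nonneg _)
        _ = ‖f‖ * ∫ η, |‖φ i (g⁻¹ * η)‖ ^ 2 - ‖φ i η‖ ^ 2| ∂μ := integral_const_mul _ _
    have step3 : ∀ i, ∫ η, |‖φ i (g⁻¹ * η)‖ ^ 2 - ‖φ i η‖ ^ 2| ∂μ
        ≤ Real.sqrt (2 * n i - 2 * (F i g).re) * Real.sqrt (4 * n i) := by
      intro i
      set u : G → ℝ := fun η => |‖φ i (g⁻¹ * η)‖ - ‖φ i η‖| with hu
      set v : G → ℝ := fun η => ‖φ i (g⁻¹ * η)‖ + ‖φ i η‖ with hv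
      have hucont : Continuous u := ((hcontl i g).norm.sub (hcont i).norm).abs
      have hvcont : Continuous v := (hcontl i g).norm.add (hcont i).norm
      have hucs : HasCompactSupport u :=
        (hasCompactSupport_sub (hcsl i g).norm (hcs i).norm).comp_left
          (g := fun x : ℝ => |x|) (by simp)
      have hvcs : HasCompactSupport v := (hcsl i g).norm.add (hcs i).norm
      have hueq : ∀ η, |‖φ i (g⁻¹ * η)‖ ^ 2 - ‖φ i η‖ ^ 2| = u η * v η := by
        intro η
        simp only [hu, hv]
        have h1 : ‖φ i (g⁻¹ * η)‖ ^ 2 - ‖φ i η‖ ^ 2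
            = (‖φ i (g⁻¹ * η)‖ - ‖φ i η‖) * (‖φ i (g⁻¹ * η)‖ + ‖φ i η‖) := by ring
        have h2 : (0 : ℝ) ≤ ‖φ i (g⁻¹ * η)‖ + ‖φ i η‖ := by positivity
        rw [h1, abs_mul, abs_of_nonneg h2]
      have hCS : ∫ η, u η * v η ∂μ
          ≤ (∫ η, u η ^ (2:ℝ) ∂μ) ^ ((1:ℝ)/2) * (∫ η, v η ^ (2:ℝ) ∂μ) ^ ((1:ℝ)/2) :=
        integral_mul_le_Lp_mul_Lq_of_nonneg Real.HolderConjugate.two_two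
          (Filter.Eventually.of_forall fun η => abs_nonneg _)
          (Filter.Eventually.of_forall fun η => by positivity)
          (hucont.memLp_of_hasCompactSupport hucs)
          (hvcont.memLp_of_hasCompactSupport hvcs)
      simp only [Real.rpow_two, ← Real.sqrt_eq_rpow] at hCS
      have hu2int : Integrable (fun η => u η ^ 2) μ :=
        (hucont.pow 2).integrable_of_hasCompactSupport
          (hucs.comp_left (g := fun x : ℝ => x ^ 2) (by simp) :)
      have hv2int : Integrable (fun η => v η ^ 2) μ :=
        (hvcont.pow 2).integrable_of_hasCompactSupport
          (hvcs.comp_left (g := fun x : ℝ => x ^ 2) (by simp) :)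
      have hWint : Integrable (fun η => ‖φ i (g⁻¹ * η) - φ i η‖ ^ 2) μ :=
        ((((hcontl i g).sub (hcont i)).norm.pow 2)).integrable_of_hasCompactSupport
          ((hasCompactSupport_sub (hcsl i g) (hcs i)).comp_left
            (g := fun z : ℂ => ‖z‖ ^ 2) (by simp) :)
      have hu2 : ∫ η, u η ^ 2 ∂μ ≤ 2 * n i - 2 * (F i g).re := by
        rw [← hW i g]
        refine integral_mono hu2int hWint fun η => ?_
        have h1 : u η ≤ ‖φ i (g⁻¹ * η) - φ i η‖ := abs_norm_sub_norm_le _ _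
        have h2 : 0 ≤ u η := abs_nonneg _
        nlinarith
      have hv2 : ∫ η, v η ^ 2 ∂μ ≤ 4 * n i := by
        have he : ∫ η, (2 * ‖φ i (g⁻¹ * η)‖ ^ 2 + 2 * ‖φ i η‖ ^ 2) ∂μ = 4 * n i := by
          rw [integral_add ((hφint2' i g).const_mul 2) ((hφint2 i).const_mul 2),
            integral_const_mul, integral_const_mul, hIinv i g]
          ring
        rw [← he]
        refine integral_mono hv2int
          (((hφint2' i g).const_mul 2).add ((hφint2 i).const_mul 2)) fun η => ?_
        have h1 : 0 ≤ ‖φ i (g⁻¹ * η)‖ := norm_nonneg _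
        have h2 : 0 ≤ ‖φ i η‖ := norm_nonneg _
        simp only [hv]
        nlinarith [sq_nonneg (‖φ i (g⁻¹ * η)‖ - ‖φ i η‖)]
      have hre : ∫ η, |‖φ i (g⁻¹ * η)‖ ^ 2 - ‖φ i η‖ ^ 2| ∂μ = ∫ η, u η * v η ∂μ :=
        integral_congr_ae (Filter.Eventually.of_forall fun η => hueq η)
      rw [hre]
      have hsm1 : Real.sqrt (∫ η, u η ^ 2 ∂μ) ≤ Real.sqrt (2 * n i - 2 * (F i g).re) :=
        Real.sqrt_le_sqrt hu2
      have hsm2 : Real.sqrt (∫ η, v η ^ 2 ∂μ) ≤ Real.sqrt (4 * n i) :=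
        Real.sqrt_le_sqrt hv2
      calc ∫ η, u η * v η ∂μ
          ≤ Real.sqrt (∫ η, u η ^ 2 ∂μ) * Real.sqrt (∫ η, v η ^ 2 ∂μ) := hCS
        _ ≤ Real.sqrt (2 * n i - 2 * (F i g).re) * Real.sqrt (4 * n i) := by
            exact mul_le_mul hsm1 hsm2 (Real.sqrt_nonneg _) (Real.sqrt_nonneg _)
    -- the bound tends to zero
    have h1 : Tendsto (fun i => 2 * n i - 2 * (F i g).re) l (nhds 0) := by
      have hre : Tendsto (fun i => (F i g).re) l (nhds ((1 : ℂ).re)) :=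
        (Complex.continuous_re.tendsto 1).comp (hFlim g)
      have := (hn1.const_mul 2).sub (hre.const_mul 2)
      simpa using this
    have h2 : Tendsto (fun i => Real.sqrt (2 * n i - 2 * (F i g).re)) l
        (nhds (Real.sqrt 0)) := (Real.continuous_sqrt.tendsto 0).comp h1
    have h3 : Tendsto (fun i => Real.sqrt (4 * n i)) l (nhds (Real.sqrt (4 * 1))) := by
      exact (Real.continuous_sqrt.tendsto _).comp (hn1.const_mul 4)
    have hbnd : Tendsto (fun i => ‖f‖ * (Real.sqrt (2 * n i - 2 * (F i g).re)
        * Real.sqrt (4 * n i))) l (nhds 0) := by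
      have := tendsto_const_nhds (x := ‖f‖) (f := l) |>.mul (h2.mul h3)
      simpa using this
    have hdiff : Tendsto (fun i => T i Lf - T i f) l (nhds 0) := by
      refine squeeze_zero_norm (fun i => ?_) hbnd
      calc ‖T i Lf - T i f‖ = |T i Lf - T i f| := Real.norm_eq_abs _
        _ ≤ ‖f‖ * ∫ η, |‖φ i (g⁻¹ * η)‖ ^ 2 - ‖φ i η‖ ^ 2| ∂μ := step2 i
        _ ≤ ‖f‖ * (Real.sqrt (2 * n i - 2 * (F i g).re) * Real.sqrt (4 * n i)) :=
            mul_le_mul_of_nonneg_left (step3 i) (norm_nonneg f)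
    have hL := ulim_spec (hex Lf)
    have hR := ulim_spec (hex f)
    have hsub : Tendsto (fun i => T i Lf - T i f) ↑U
        (nhds (ulim U (fun i => T i Lf) - ulim U (fun i => T i f))) := hL.sub hR
    have h0 : ulim U (fun i => T i Lf) - ulim U (fun i => T i f) = 0 :=
      tendsto_nhds_unique hsub (hdiff.mono_left hUle)
    show ulim U (fun i => T i Lf) = ulim U (fun i => T i f)
    linarith
end
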